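/- Let L and R be finite nonempty families of pseudo-lines such that any two distinct members of L ∪ R cross exactly once, no three distinct members of L ∪ R take a common value at a common point, and l ≺ r holds for every l ∈ L and every r ∈ R. Let (v, w) ∈ L × R be the unique pair whose crossing lies on the upper envelope of L ∪ R. Fix l ∈ L and let r ∈ R be the member of R whose crossing with l has the smallest x-coordinate among all crossings of l with members of R. If l' ∈ L is such that the crossing of l' with r has a smaller x-coordinate than the crossing of l with r, then l' ≠ v. -/
import Mathlib


noncomputable local instance : DecidableEq (ℝ → ℝ) := Classical.decEq _

/-- `Prec f g` (written `f ≺ g`): the pseudo-lines `f` and `g` cross exactly once,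
at a point `x₀` with `f x > g x` for all `x < x₀` and `f x < g x` for all `x > x₀`. -/
def Prec (f g : ℝ → ℝ) : Prop :=
  ∃ x₀ : ℝ, f x₀ = g x₀ ∧ (∀ x < x₀, g x < f x) ∧ (∀ x > x₀, f x < g x)

/-- Two pseudo-lines cross exactly once. -/
def CrossesOnce (f g : ℝ → ℝ) : Prop :=
  Prec f g ∨ Prec g f

theorem prune_L_side
    (L R : Finset (ℝ → ℝ)) (hL : L.Nonempty) (hR : R.Nonempty)
    (hcont : ∀ f ∈ L ∪ R, Continuous f)
    (hcross : ∀ f ∈ L ∪ R, ∀ g ∈ L ∪ R, f ≠ g → CrossesOnce f g)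
    (hnothree : ∀ f ∈ L ∪ R, ∀ g ∈ L ∪ R, ∀ h ∈ L ∪ R, f ≠ g → f ≠ h → g ≠ h →
      ∀ x : ℝ, ¬(f x = g x ∧ g x = h x))
    (hprec : ∀ l ∈ L, ∀ r ∈ R, Prec l r)
    -- `(v, w)` is the unique pair in `L × R` whose crossing lies on
    -- the upper envelope of `L ∪ R`:
    (v w : ℝ → ℝ) (hv : v ∈ L) (hw : w ∈ R) (xvw : ℝ)
    (hvw : v xvw = w xvw)
    (henv : v xvw = (L ∪ R).sup' hL.inl (fun f => f xvw))
    (huniq : ∀ v' ∈ L, ∀ w' ∈ R, ∀ x : ℝ, v' x = w' x →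
      v' x = (L ∪ R).sup' hL.inl (fun f => f x) → v' = v ∧ w' = w)
    -- `l ∈ L` is fixed, and `r ∈ R` is the member of `R` whose crossing with `l`
    -- (at `xlr`) has the smallest x-coordinate among all crossings of `l` with
    -- members of `R`:
    (l : ℝ → ℝ) (hl : l ∈ L) (r : ℝ → ℝ) (hr : r ∈ R) (xlr : ℝ)
    (hxlr : l xlr = r xlr)
    (hmin : ∀ r'' ∈ R, ∀ x : ℝ, l x = r'' x → xlr ≤ x)
    -- `l' ∈ L` crosses `r` (at `x'`) strictly to the left of `xlr`:
    (l' : ℝ → ℝ) (hl' : l' ∈ L) (x' : ℝ) (hx' : l' x' = r x')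
    (hlt : x' < xlr) :
    l' ≠ v := by
  intro hEq
  subst hEq
  obtain ⟨x₀, heq, hneg, hpos⟩ := hprec l' hl' r hr
  have hx0 : x₀ = x' := by
    rcases lt_trichotomy x₀ x' with h | h | h
    · exact absurd hx' (ne_of_lt (hpos x' h))
    · exact h
    · exact absurd hx'.symm (ne_of_lt (hneg x' h))
  subst hx0
  have hrle : r xvw ≤ l' xvw := henv ▸ Finset.le_sup' (fun f => f xvw) (Finset.mem_union_right L hr)
  have hxvw : xvw ≤ x₀ := by
    by_contra h
    push_neg at h
    exact absurd hrle (not_le.mpr (hpos xvw h))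
  obtain ⟨y₀, heqw, hnegw, hposw⟩ := hprec l hl w hw
  have hy : xlr ≤ y₀ := hmin w hw y₀ heqw
  have hwl : w xvw < l xvw := hnegw xvw (by linarith)
  have hlle : l xvw ≤ l' xvw := henv ▸ Finset.le_sup' (fun f => f xvw) (Finset.mem_union_left R hl)
  linarith [hvw]
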